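/- (Key step of Lemma 3.9) Let μ be regular, λ = μ⁺, and let S ⊆ λ satisfy: for every δ ∈ S with cf(δ) = μ, δ = sup(δ ∩ S). Let δ₀ < γ < λ with cf(δ₀) < μ and cf(γ) < μ. Then there is an injection i ↦ j_i defined on A = {i ∈ γ − δ₀ : cf(i) = μ and i ∈ S} such that for each i ∈ A: j_i ∈ (i − δ₀) ∩ S, cf(j_i) < μ, and the map is injective. -/

import Mathlib

/-!
Enumerate the points `i` in order type at most `μ` and choose the `j_i` by recursion. At stage
`i` fewer than `μ = cf i` values have been used, so they are bounded below `i`; above that bound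
(and above `δ₀`, which lies below `i` because `cf δ₀ < cf i`) there is still a point of `S` of
cofinality `< μ`.
-/

open Cardinal Set Function

universe u

theorem exists_injective_forall_mem {α β : Type u} {κ : Cardinal.{u}} (hα : #α ≤ κ)
    (T : α → Set β) (hT : ∀ a (s : Set β), #s < κ → (T a \ s).Nonempty) :
    ∃ g : α → β, Injective g ∧ ∀ a, g a ∈ T a := by
  obtain ⟨e⟩ : Nonempty (α ↪ κ.ord.ToType) := by rwa [← Cardinal.le_def, mk_ord_toType]
  have mk_range_lt : ∀ a (f : {b // e b < e a} → β), #(range f) < κ := fun a f =>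
    calc #(range f) ≤ #{b // e b < e a} := mk_range_le
      _ ≤ #(Iio (e a)) := mk_le_of_injective (f := fun b => ⟨e b, b.2⟩)
          fun b b' h => Subtype.ext (e.injective (congrArg Subtype.val h))
      _ < κ := by simpa using mk_Iio_lt (e a)
  -- Recursion along `e`: choose `g a` in `T a` avoiding the values already chosen.
  let g := (InvImage.wf e wellFounded_lt).fix fun a IH =>
    (hT a _ (mk_range_lt a fun b => IH b b.2)).some
  have hg : ∀ a, g a ∈ T a ∧ ∀ b, e b < e a → g b ≠ g a := by
    intro a
    have hfix : g a = (hT a _ (mk_range_lt a fun b => g b)).some :=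
      WellFounded.fix_eq _ _ _
    obtain ⟨hmem, hfresh⟩ := hfix ▸ (hT a _ (mk_range_lt a fun b => g b)).some_mem
    exact ⟨hmem, fun b hb hba => hfresh ⟨⟨b, hb⟩, hba⟩⟩
  refine ⟨g, fun a a' h => ?_, fun a => (hg a).1⟩
  by_contra hne
  rcases lt_or_gt_of_ne (e.injective.ne hne) with hlt | hlt
  · exact (hg a').2 a hlt h
  · exact (hg a).2 a' hlt h.symm

theorem Ordinal.exists_lt_forall_le_of_mk_lt_cof {s : Set Ordinal.{u}} {a : Ordinal.{u}}
    (hs : #s < Cardinal.lift.{u + 1} a.cof) : ∃ b < a, ∀ c ∈ s, c < a → c ≤ b := by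
  have hbdd : BddAbove (s ∩ Iio a) := ⟨a, fun c hc => hc.2.le⟩
  refine ⟨sSup (s ∩ Iio a), Ordinal.sSup_lt_of_lt_cof ?_ fun c hc => hc.2,
    fun c hc hca => le_csSup hbdd ⟨hc, hca⟩⟩
  rw [← Ordinal.lift_cof]
  exact (mk_le_mk_of_subset inter_subset_left).trans_lt hs

theorem Ordinal.exists_mem_diff_of_mk_lt_cof {P s : Set Ordinal.{u}} {a b : Ordinal.{u}}
    (hP : ∀ b < a, ∃ c ∈ P, b < c ∧ c < a) (hs : #s < Cardinal.lift.{u + 1} a.cof)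
    (hb : b < a) : ∃ c ∈ P \ s, b < c ∧ c < a := by
  obtain ⟨b', hb'a, hsb'⟩ := exists_lt_forall_le_of_mk_lt_cof hs
  obtain ⟨c, hcP, hc, hca⟩ := hP _ (max_lt hb hb'a)
  exact ⟨c, ⟨hcP, fun hcs => (hsb' c hcs hca).not_gt ((le_max_right _ _).trans_lt hc)⟩,
    (le_max_left _ _).trans_lt hc, hca⟩

theorem stmt12_general (μ : Cardinal.{0}) (S : Set Ordinal.{0})
    (hS2 : ∀ δ ∈ S, δ.cof = μ → ∀ b, b < δ → ∃ c ∈ S, b < c ∧ c < δ ∧ c.cof < μ)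
    (δ0 γ : Ordinal.{0})
    (hcof1 : δ0.cof < μ)
    (hA : Cardinal.mk {i : Ordinal.{0} | δ0 ≤ i ∧ i < γ ∧ i.cof = μ ∧ i ∈ S}
      ≤ Cardinal.lift.{1, 0} μ) :
    ∃ j : Ordinal.{0} → Ordinal.{0},
      (∀ i, δ0 ≤ i → i < γ → i.cof = μ → i ∈ S →
        δ0 ≤ j i ∧ j i < i ∧ j i ∈ S ∧ (j i).cof < μ) ∧
      Set.InjOn j {i | δ0 ≤ i ∧ i < γ ∧ i.cof = μ ∧ i ∈ S} := by
  classical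
  set A := {i : Ordinal.{0} | δ0 ≤ i ∧ i < γ ∧ i.cof = μ ∧ i ∈ S}
  obtain ⟨g, hg_inj, hg_mem⟩ := exists_injective_forall_mem hA
    (fun i : A => {c | δ0 ≤ c ∧ c < i ∧ c ∈ S ∧ c.cof < μ}) fun ⟨i, hδ0le, _, hcof, hiS⟩ s hs => by
      have hδ0i : δ0 < i := hδ0le.lt_of_ne (by rintro rfl; exact hcof1.ne hcof)
      obtain ⟨c, ⟨⟨hcS, hccof⟩, hcs⟩, hδ0c, hci⟩ :=
        Ordinal.exists_mem_diff_of_mk_lt_cof (P := {c | c ∈ S ∧ c.cof < μ})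
          (fun b hb => (hS2 i hiS hcof b hb).imp fun c ⟨hcS, hbc, hci, hccof⟩ =>
            ⟨⟨hcS, hccof⟩, hbc, hci⟩) (hcof ▸ hs) hδ0i
      exact ⟨c, ⟨hδ0c.le, hci, hcS, hccof⟩, hcs⟩
  refine ⟨fun i => if h : i ∈ A then g ⟨i, h⟩ else 0, fun i h1 h2 h3 h4 => ?_, ?_⟩
  · simpa [dif_pos (show i ∈ A from ⟨h1, h2, h3, h4⟩)] using hg_mem ⟨i, _⟩
  · intro i hi i' hi' h
    simp only [dif_pos hi, dif_pos hi'] at h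
    exact congrArg Subtype.val (hg_inj h)

/-- Key combinatorial step of Lemma 3.9: `μ` regular, `λ = μ⁺`, `S ⊆ λ` such that
every `δ ∈ S` of cofinality `μ` is a limit of points of `S` (indeed of points of
`S` of cofinality `< μ`).  For `δ₀ < γ < λ` of cofinality `< μ`, the points
`i ∈ γ − δ₀` with `cf i = μ` and `i ∈ S` (at most `μ` many) can be injectively
matched with points `j_i ∈ (i − δ₀) ∩ S` of cofinality `< μ`. -/
theorem stmt12 (μ : Cardinal.{0}) (hμ : μ.IsRegular) (S : Set Ordinal.{0})
    (hS : ∀ δ ∈ S, δ.cof = μ → δ = sSup (S ∩ Set.Iio δ))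
    (hS2 : ∀ δ ∈ S, δ.cof = μ → ∀ b, b < δ → ∃ c ∈ S, b < c ∧ c < δ ∧ c.cof < μ)
    (δ0 γ : Ordinal.{0}) (hδγ : δ0 < γ) (hγ : γ < (Order.succ μ).ord)
    (hcof1 : δ0.cof < μ) (hcof2 : γ.cof < μ)
    (hA : Cardinal.mk {i : Ordinal.{0} | δ0 ≤ i ∧ i < γ ∧ i.cof = μ ∧ i ∈ S}
      ≤ Cardinal.lift.{1, 0} μ) :
    ∃ j : Ordinal.{0} → Ordinal.{0},
      (∀ i, δ0 ≤ i → i < γ → i.cof = μ → i ∈ S →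
        δ0 ≤ j i ∧ j i < i ∧ j i ∈ S ∧ (j i).cof < μ) ∧
      Set.InjOn j {i | δ0 ≤ i ∧ i < γ ∧ i.cof = μ ∧ i ∈ S} :=
  stmt12_general μ S hS2 δ0 γ hcof1 hA
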